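/- arXiv:math/0401032 — 2 statements merged into one kernel-verified Lean document; each statement's English description precedes it below -/
import Mathlib

section
/- Set u_{n+1} = 1/t and Δₙ(v) = ∏_{1 ≤ i < j ≤ n} (v_i − v_j). Then the following exact factorization holds in K: H(u₁, …, uₙ, 1/t; v₁, …, vₙ, 0) = (1 + a) · Δₙ(v)⁻¹ · det_{1 ≤ i, j ≤ n} [ v_i^{n−j} · ( 1 + a·t^j · ∏_{k=1}^{n+1} (u_k − v_i)/(t·u_k − v_i) ) ]. Consequently H(u₁, …, uₙ, 1/t; v₁, …, vₙ, 0), viewed as a polynomial in a over ℚ(q, t, u₁, …, uₙ, v₁, …, vₙ), vanishes at a = −1, and the limit lim_{a→−1} (1 + a)⁻¹ · H(u₁, …, uₙ, 1/t; v₁, …, vₙ, 0) equals Δₙ(v)⁻¹ · det_{1 ≤ i, j ≤ n} [ v_i^{n−j} · ( 1 − t^j · ∏_{k=1}^{n+1} (u_k − v_i)/(t·u_k − v_i) ) ]. -/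
open scoped BigOperators

noncomputable section

namespace Stmt3

/-- The indeterminates `q, t, u₁, …, uₙ, v₁, …, vₙ`. -/
inductive PVar (n : ℕ) : Type
  | q : PVar n
  | t : PVar n
  | u (i : Fin n) : PVar n
  | v (i : Fin n) : PVar n

/-- The field `K₀ = ℚ(q, t, u₁, …, uₙ, v₁, …, vₙ)`. -/
abbrev K0 (n : ℕ) : Type := FractionRing (MvPolynomial (PVar n) ℚ)

/-- The indeterminates, viewed as elements of `K₀`. -/
def X {n : ℕ} (w : PVar n) : K0 n :=
  algebraMap (MvPolynomial (PVar n) ℚ) (K0 n) (MvPolynomial.X w)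

/-- The tuple `(u₁, …, uₙ, 1/t)`. -/
def uext (n : ℕ) : Fin (n + 1) → K0 n :=
  Fin.snoc (fun i => X (PVar.u i)) (X PVar.t)⁻¹

/-- The tuple `(v₁, …, vₙ, 0)`. -/
def vext (n : ℕ) : Fin (n + 1) → K0 n :=
  Fin.snoc (fun i => X (PVar.v i)) 0

/-- `H(u₁, …, uₙ, 1/t; v₁, …, vₙ, 0)`, viewed as a polynomial in `a` over
`K₀ = ℚ(q, t, u₁, …, uₙ, v₁, …, vₙ)`; here the polynomial variable `Polynomial.X`
plays the role of `a`, and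
`H(U; V) = Δ(V)⁻¹ · det_{1 ≤ i,j ≤ n+1}
[ V_i^{n+1-j} · (1 + a·t^j · ∏_{k=1}^{n+1} (U_k - V_i)/(t·U_k - V_i)) ]`. -/
def Hpoly (n : ℕ) : Polynomial (K0 n) :=
  Polynomial.C (∏ i : Fin (n + 1), ∏ j ∈ Finset.Ioi i, (vext n i - vext n j))⁻¹ *
    Matrix.det (Matrix.of fun i j : Fin (n + 1) =>
      Polynomial.C (vext n i ^ (n - (j : ℕ))) *
        (1 + Polynomial.X *
          Polynomial.C (X PVar.t ^ ((j : ℕ) + 1) *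
            ∏ k : Fin (n + 1),
              (uext n k - vext n i) / (X PVar.t * uext n k - vext n i))))

/-- The cofactor `Δₙ(v)⁻¹ · det_{1 ≤ i,j ≤ n}
[ v_i^{n-j} · (1 + a·t^j · ∏_{k=1}^{n+1} (u_k - v_i)/(t·u_k - v_i)) ]` (with `u_{n+1} = 1/t`),
viewed as a polynomial in `a`. -/
def Dpoly (n : ℕ) : Polynomial (K0 n) :=
  Polynomial.C (∏ i : Fin n, ∏ j ∈ Finset.Ioi i, (X (PVar.v i) - X (PVar.v j)))⁻¹ *
    Matrix.det (Matrix.of fun i j : Fin n =>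
      Polynomial.C (X (PVar.v i) ^ (n - 1 - (j : ℕ))) *
        (1 + Polynomial.X *
          Polynomial.C (X PVar.t ^ ((j : ℕ) + 1) *
            ∏ k : Fin (n + 1),
              (uext n k - X (PVar.v i)) / (X PVar.t * uext n k - X (PVar.v i)))))

/-! The last entry of `vext` is `0`, so the last row of the big matrix vanishes except in the
corner, where `∏ₖ Uₖ / (t Uₖ) = t^{-(n+1)}` cancels `t^{n+1}` and leaves `1 + a`. Expanding along
that row and pulling the factor `vᵢ` out of every remaining row gives
`(1 + a) · ∏ᵢ vᵢ · det[n × n]`, and the same factor `∏ᵢ vᵢ` splits off `Δ(v, 0) = Δₙ(v) · ∏ᵢ vᵢ`. -/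

open Finset in
theorem _root_.Fin.prod_Ioi_castSucc {M : Type*} [CommMonoid M] {n : ℕ}
    (f : Fin (n + 1) → M) (i : Fin n) :
    ∏ j ∈ Ioi i.castSucc, f j = (∏ j ∈ Ioi i, f j.castSucc) * f (Fin.last n) := by
  rw [Ioi_eq_Ioc, Fin.top_eq_last, ← Ioo_insert_right (Fin.castSucc_lt_last i),
    prod_insert right_notMem_Ioo, ← Fin.map_castSuccEmb_Ioi, prod_map, mul_comm]
  rfl

open Finset in
theorem _root_.Fin.prod_prod_Ioi_castSucc {M : Type*} [CommMonoid M] {n : ℕ}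
    (f : Fin (n + 1) → Fin (n + 1) → M) :
    ∏ i, ∏ j ∈ Ioi i, f i j =
      (∏ i : Fin n, ∏ j ∈ Ioi i, f i.castSucc j.castSucc) *
        ∏ i : Fin n, f i.castSucc (Fin.last n) := by
  rw [Fin.prod_univ_castSucc, Ioi_eq_empty.2 fun j _ => j.le_last, prod_empty, mul_one,
    ← prod_mul_distrib]
  simp only [Fin.prod_Ioi_castSucc]

theorem _root_.Matrix.det_succ_of_last_row_eq_zero {R : Type*} [CommRing R] {n : ℕ}
    (M : Matrix (Fin (n + 1)) (Fin (n + 1)) R)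
    (h : ∀ j : Fin n, M (Fin.last n) j.castSucc = 0) :
    M.det = M (Fin.last n) (Fin.last n) * (M.submatrix Fin.castSucc Fin.castSucc).det := by
  rw [Matrix.det_succ_row M (Fin.last n), Fin.sum_univ_castSucc]
  simp [h, Fin.succAbove_last, ← two_mul, pow_mul]

section

open Polynomial hiding X

variable {n : ℕ}

theorem X_ne_zero (w : PVar n) : X w ≠ 0 :=
  (map_ne_zero_iff _ (IsFractionRing.injective _ _)).2 (MvPolynomial.X_ne_zero w)

theorem uext_ne_zero (k : Fin (n + 1)) : uext n k ≠ 0 := by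
  induction k using Fin.lastCases <;> simp [uext, X_ne_zero]

@[simp]
theorem vext_castSucc (i : Fin n) : vext n i.castSucc = X (PVar.v i) :=
  Fin.snoc_castSucc ..

@[simp]
theorem vext_last : vext n (Fin.last n) = 0 :=
  Fin.snoc_last ..

theorem prod_uext_div_eq_inv_pow :
    ∏ k : Fin (n + 1), uext n k / (X PVar.t * uext n k) = (X PVar.t ^ (n + 1))⁻¹ := by
  simp [div_mul_cancel_right₀ (uext_ne_zero _)]

variable (n) in
def Hmat : Matrix (Fin (n + 1)) (Fin (n + 1)) (K0 n)[X] :=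
  Matrix.of fun i j : Fin (n + 1) =>
    C (vext n i ^ (n - (j : ℕ))) *
      (1 + Polynomial.X * C (X PVar.t ^ ((j : ℕ) + 1) *
        ∏ k : Fin (n + 1), (uext n k - vext n i) / (X PVar.t * uext n k - vext n i)))

variable (n) in
def Dmat : Matrix (Fin n) (Fin n) (K0 n)[X] :=
  Matrix.of fun i j : Fin n =>
    C (X (PVar.v i) ^ (n - 1 - (j : ℕ))) *
      (1 + Polynomial.X * C (X PVar.t ^ ((j : ℕ) + 1) *
        ∏ k : Fin (n + 1), (uext n k - X (PVar.v i)) / (X PVar.t * uext n k - X (PVar.v i))))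

theorem Hmat_last_castSucc (j : Fin n) : Hmat n (Fin.last n) j.castSucc = 0 := by
  have hj : n - (j : ℕ) ≠ 0 := by omega
  simp [Hmat, hj]

theorem Hmat_last_last : Hmat n (Fin.last n) (Fin.last n) = 1 + Polynomial.X := by
  simp only [Hmat, Matrix.of_apply, vext_last, sub_zero, Fin.val_last, Nat.sub_self, pow_zero,
    C_1, one_mul, prod_uext_div_eq_inv_pow, mul_inv_cancel₀ (pow_ne_zero _ (X_ne_zero _)), mul_one]

theorem Hmat_castSucc_castSucc (i j : Fin n) :
    Hmat n i.castSucc j.castSucc = C (X (PVar.v i)) * Dmat n i j := by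
  have hj : n - (j : ℕ) = n - 1 - (j : ℕ) + 1 := by omega
  simp only [Hmat, Dmat, Matrix.of_apply, vext_castSucc, Fin.val_castSucc, hj, pow_succ, C_mul]
  ring

theorem det_Hmat : (Hmat n).det = C (∏ i, X (PVar.v i)) * ((1 + Polynomial.X) * (Dmat n).det) := by
  rw [Matrix.det_succ_of_last_row_eq_zero _ Hmat_last_castSucc, Hmat_last_last, map_prod,
    mul_left_comm, ← Matrix.det_mul_column]
  congr 3
  exact Matrix.ext Hmat_castSucc_castSucc

theorem prod_prod_Ioi_vext_sub :
    ∏ i, ∏ j ∈ Finset.Ioi i, (vext n i - vext n j) =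
      (∏ i : Fin n, ∏ j ∈ Finset.Ioi i, (X (PVar.v i) - X (PVar.v j))) * ∏ i, X (PVar.v i) := by
  simp [Fin.prod_prod_Ioi_castSucc]

theorem Hpoly_eq_one_add_X_mul_Dpoly : Hpoly n = (1 + Polynomial.X) * Dpoly n := by
  have hv : ∏ i, X (PVar.v i) ≠ (0 : K0 n) := Finset.prod_ne_zero_iff.2 fun i _ => X_ne_zero _
  change C _ * (Hmat n).det = (1 + Polynomial.X) * (C _ * (Dmat n).det)
  rw [det_Hmat, prod_prod_Ioi_vext_sub, mul_inv, ← mul_assoc, ← C_mul, inv_mul_cancel_right₀ hv,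
    mul_left_comm]

theorem Hpoly_divByMonic : Hpoly n /ₘ (Polynomial.X + 1) = Dpoly n := by
  rw [Hpoly_eq_one_add_X_mul_Dpoly, add_comm, ← C_1, mul_divByMonic_cancel_left _ (monic_X_add_C 1)]

theorem eval_neg_one_Dpoly :
    (Dpoly n).eval (-1) =
      (∏ i : Fin n, ∏ j ∈ Finset.Ioi i, (X (PVar.v i) - X (PVar.v j)))⁻¹ *
        Matrix.det (Matrix.of fun i j : Fin n =>
          X (PVar.v i) ^ (n - 1 - (j : ℕ)) *
            (1 - X PVar.t ^ ((j : ℕ) + 1) *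
              ∏ k : Fin (n + 1),
                (uext n k - X (PVar.v i)) / (X PVar.t * uext n k - X (PVar.v i)))) := by
  change eval (-1) (C _ * (Dmat n).det) = _
  rw [eval_mul, eval_C, ← coe_evalRingHom, RingHom.map_det]
  congr 2
  ext i j
  simp only [Dmat, RingHom.mapMatrix_apply, Matrix.map_apply, Matrix.of_apply, coe_evalRingHom,
    eval_mul, eval_add, eval_one, eval_C, eval_X]
  ring

end

theorem statement3_general (n : ℕ) :
    Hpoly n = (1 + Polynomial.X) * Dpoly n ∧
      (Hpoly n).eval (-1) = 0 ∧
      ((Hpoly n) /ₘ (Polynomial.X + 1)).eval (-1) =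
        (∏ i : Fin n, ∏ j ∈ Finset.Ioi i, (X (PVar.v i) - X (PVar.v j)))⁻¹ *
          Matrix.det (Matrix.of fun i j : Fin n =>
            X (PVar.v i) ^ (n - 1 - (j : ℕ)) *
              (1 - X PVar.t ^ ((j : ℕ) + 1) *
                ∏ k : Fin (n + 1),
                  (uext n k - X (PVar.v i)) /
                    (X PVar.t * uext n k - X (PVar.v i)))) :=
  ⟨Hpoly_eq_one_add_X_mul_Dpoly, by simp [Hpoly_eq_one_add_X_mul_Dpoly],
    Hpoly_divByMonic ▸ eval_neg_one_Dpoly⟩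

theorem statement3 (n : ℕ) (hn : 1 ≤ n) :
    Hpoly n = (1 + Polynomial.X) * Dpoly n ∧
      (Hpoly n).eval (-1) = 0 ∧
      ((Hpoly n) /ₘ (Polynomial.X + 1)).eval (-1) =
        (∏ i : Fin n, ∏ j ∈ Finset.Ioi i, (X (PVar.v i) - X (PVar.v j)))⁻¹ *
          Matrix.det (Matrix.of fun i j : Fin n =>
            X (PVar.v i) ^ (n - 1 - (j : ℕ)) *
              (1 - X PVar.t ^ ((j : ℕ) + 1) *
                ∏ k : Fin (n + 1),
                  (uext n k - X (PVar.v i)) /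
                    (X PVar.t * uext n k - X (PVar.v i)))) :=
  statement3_general n

end Stmt3
end
end

section
/- Let θ = (θ₁, …, θₙ) ∈ ℕⁿ, set v_i = q^{θ_i}·u_i for 1 ≤ i ≤ n, u_{n+1} = 1/t, and Δ(v) = ∏_{1 ≤ i < j ≤ n} (v_i − v_j). Then the following two expressions are equal in K (both define the coefficient C^{(q,t)}_{θ₁,…,θₙ}(u₁,…,uₙ)): ∏_{k=1}^n [ t^{θ_k} · (q/t; q)_{θ_k}/(q; q)_{θ_k} · (q·u_k; q)_{θ_k}/(q·t·u_k; q)_{θ_k} ] · ∏_{1 ≤ i < j ≤ n} [ (q·u_i/(t·u_j); q)_{θ_i}/(q·u_i/u_j; q)_{θ_i} · (t·u_i/v_j; q)_{θ_i}/(u_i/v_j; q)_{θ_i} ] · Δ(v)⁻¹ · det_{1 ≤ i, j ≤ n} [ v_i^{n−j} · ( 1 − t^{j−1} · ((1 − t·v_i)/(1 − v_i)) · ∏_{k=1}^{n} (u_k − v_i)/(t·u_k − v_i) ) ] = ∏_{1 ≤ i < j ≤ n+1} (q·u_i/(t·u_j); q)_{θ_i}/(q·u_i/u_j; q)_{θ_i}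 · ∏_{1 ≤ i ≤ j ≤ n} (t·u_i/v_j; q)_{θ_i}/(u_i/v_j; q)_{θ_i} · Δ(v)⁻¹ · det_{1 ≤ i, j ≤ n} [ v_i^{n−j} · ( 1 − t^j · ∏_{k=1}^{n+1} (u_k − v_i)/(t·u_k − v_i) ) ]. -/
/-!
The two sides agree factor by factor. In the first product on the right, the extra factor
`j = n + 1` (where `u_{n+1} = 1/t`) is `(q u_i; q)_{θ_i} / (q t u_i; q)_{θ_i}`. In the second,
the diagonal factor `j = i` is `(t q^{-θ_i}; q)_{θ_i} / (q^{-θ_i}; q)_{θ_i}`, which the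
reflection `(x q^{-m}; q)_m = ∏_{l<m} (-x q^{-l-1}) · (q/x; q)_m` turns into
`t^{θ_i} (q/t; q)_{θ_i} / (q; q)_{θ_i}`. In the determinant, the factor `k = n + 1` together with
one power of `t` gives `t^j (1 - t v_i) / (1 - v_i)`.
-/

open scoped BigOperators

noncomputable section

namespace Stmt5

/-- The indeterminates `q, t, u₁, …, uₙ`. -/
inductive PVar (n : ℕ) : Type
  | q : PVar n
  | t : PVar n
  | u (i : Fin n) : PVar n

/-- The field `K = ℚ(q, t, u₁, …, uₙ)`. -/
abbrev K (n : ℕ) : Type := FractionRing (MvPolynomial (PVar n) ℚ)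

/-- The indeterminates, viewed as elements of `K`. -/
def X {n : ℕ} (w : PVar n) : K n :=
  algebraMap (MvPolynomial (PVar n) ℚ) (K n) (MvPolynomial.X w)

/-- The q-Pochhammer symbol `(x; q)_m = ∏_{l=0}^{m-1} (1 - x·q^l)`. -/
def qpoch {F : Type*} [Field F] (q x : F) (m : ℕ) : F :=
  ∏ l ∈ Finset.range m, (1 - x * q ^ l)

/-- `v_i = q^{θ_i}·u_i`. -/
def v {n : ℕ} (θ : Fin n → ℕ) (i : Fin n) : K n :=
  X PVar.q ^ θ i * X (PVar.u i)

/-- The tuple `(u₁, …, uₙ, 1/t)`. -/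
def uext (n : ℕ) : Fin (n + 1) → K n :=
  Fin.snoc (fun i => X (PVar.u i)) (X PVar.t)⁻¹

open Finset

section

variable {F : Type*} [Field F] {q : F}

theorem qpoch_div_pow_reflect (hq : q ≠ 0) {x : F} (hx : x ≠ 0) (m : ℕ) :
    qpoch q (x / q ^ m) m = (∏ l ∈ range m, (-x / q ^ (l + 1))) * qpoch q (q / x) m := by
  rw [qpoch, qpoch, ← prod_range_reflect, ← prod_mul_distrib]
  refine prod_congr rfl fun l hl => ?_
  have hsplit : q ^ m = q ^ (m - 1 - l) * q ^ (l + 1) := by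
    rw [← pow_add]; congr 1; have := mem_range.mp hl; omega
  rw [hsplit]
  field_simp
  ring

theorem qpoch_div_pow_div_qpoch_one_div_pow (hq : q ≠ 0) {x : F} (hx : x ≠ 0) (m : ℕ) :
    qpoch q (x / q ^ m) m / qpoch q (1 / q ^ m) m = x ^ m * (qpoch q (q / x) m / qpoch q q m) := by
  rw [qpoch_div_pow_reflect hq hx, qpoch_div_pow_reflect hq one_ne_zero, div_one,
    mul_div_mul_comm, ← prod_div_distrib]
  congr 1
  calc ∏ l ∈ range m, -x / q ^ (l + 1) / (-1 / q ^ (l + 1))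
      = ∏ _l ∈ range m, x := prod_congr rfl fun l _ => by field_simp
    _ = x ^ m := by rw [prod_const, card_range]

theorem pow_succ_mul_prod_snoc_inv {n : ℕ} {t : F} (ht : t ≠ 0) (u : Fin n → F) (w : F)
    (j : ℕ) :
    t ^ (j + 1) * ∏ k : Fin (n + 1), ((Fin.snoc u t⁻¹ : Fin (n + 1) → F) k - w) /
      (t * (Fin.snoc u t⁻¹ : Fin (n + 1) → F) k - w) =
      t ^ j * ((1 - t * w) / (1 - w)) * ∏ k : Fin n, (u k - w) / (t * u k - w) := by
  rw [Fin.prod_univ_castSucc]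
  simp only [Fin.snoc_castSucc, Fin.snoc_last, mul_inv_cancel₀ ht]
  have hlast : t ^ (j + 1) * (t⁻¹ - w) = t ^ j * (1 - t * w) := by
    rw [pow_succ]; field_simp
  rw [mul_comm (∏ k : Fin n, _), ← mul_assoc, mul_div_assoc', hlast, mul_div_assoc]

end

theorem prod_Ioi_castSucc {M : Type*} [CommMonoid M] {n : ℕ} (f : Fin (n + 1) → M)
    (i : Fin n) :
    ∏ j ∈ Ioi i.castSucc, f j = f (Fin.last n) * ∏ j ∈ Ioi i, f j.castSucc := by
  rw [← Ioc_top, Fin.top_eq_last, ← Ioo_insert_right (Fin.castSucc_lt_last i),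
    prod_insert (by simp), ← Fin.finsetImage_castSucc_Ioi,
    prod_image (Fin.castSucc_injective n).injOn]

theorem X_ne_zero {n : ℕ} (w : PVar n) : X w ≠ 0 :=
  (map_ne_zero_iff _ (IsFractionRing.injective _ _)).mpr (MvPolynomial.X_ne_zero w)

theorem qpoch_ratio_v_self {n : ℕ} (θ : Fin n → ℕ) (i : Fin n) :
    qpoch (X PVar.q) (X PVar.t * X (PVar.u i) / v θ i) (θ i) /
        qpoch (X PVar.q) (X (PVar.u i) / v θ i) (θ i) =
      X PVar.t ^ θ i *
        (qpoch (X PVar.q) (X PVar.q / X PVar.t) (θ i) / qpoch (X PVar.q) (X PVar.q) (θ i)) := by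
  rw [v, mul_div_mul_right _ _ (X_ne_zero _), div_mul_cancel_right₀ (X_ne_zero _), ← one_div,
    qpoch_div_pow_div_qpoch_one_div_pow (X_ne_zero _) (X_ne_zero _)]

theorem qpoch_ratio_uext_last {n : ℕ} (i : Fin n) (m : ℕ) :
    qpoch (X PVar.q) (X PVar.q * uext n i.castSucc / (X PVar.t * uext n (Fin.last n))) m /
        qpoch (X PVar.q) (X PVar.q * uext n i.castSucc / uext n (Fin.last n)) m =
      qpoch (X PVar.q) (X PVar.q * X (PVar.u i)) m /
        qpoch (X PVar.q) (X PVar.q * X PVar.t * X (PVar.u i)) m := by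
  simp only [uext, Fin.snoc_castSucc, Fin.snoc_last, mul_inv_cancel₀ (X_ne_zero _), div_one,
    div_inv_eq_mul, mul_right_comm _ (X (PVar.u i))]

theorem statement5_general (n : ℕ) (θ : Fin n → ℕ) :
    (∏ k : Fin n,
        X PVar.t ^ θ k *
          (qpoch (X PVar.q) (X PVar.q / X PVar.t) (θ k) / qpoch (X PVar.q) (X PVar.q) (θ k)) *
          (qpoch (X PVar.q) (X PVar.q * X (PVar.u k)) (θ k) /
            qpoch (X PVar.q) (X PVar.q * X PVar.t * X (PVar.u k)) (θ k))) *
      (∏ i : Fin n, ∏ j ∈ Finset.Ioi i,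
        (qpoch (X PVar.q) (X PVar.q * X (PVar.u i) / (X PVar.t * X (PVar.u j))) (θ i) /
            qpoch (X PVar.q) (X PVar.q * X (PVar.u i) / X (PVar.u j)) (θ i)) *
          (qpoch (X PVar.q) (X PVar.t * X (PVar.u i) / v θ j) (θ i) /
            qpoch (X PVar.q) (X (PVar.u i) / v θ j) (θ i))) *
      ((∏ i : Fin n, ∏ j ∈ Finset.Ioi i, (v θ i - v θ j))⁻¹ *
        Matrix.det (Matrix.of fun i j : Fin n =>
          v θ i ^ (n - 1 - (j : ℕ)) *
            (1 - X PVar.t ^ (j : ℕ) * ((1 - X PVar.t * v θ i) / (1 - v θ i)) *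
              ∏ k : Fin n,
                (X (PVar.u k) - v θ i) / (X PVar.t * X (PVar.u k) - v θ i)))) =
    (∏ i : Fin n, ∏ j ∈ Finset.Ioi i.castSucc,
        qpoch (X PVar.q) (X PVar.q * uext n i.castSucc / (X PVar.t * uext n j)) (θ i) /
          qpoch (X PVar.q) (X PVar.q * uext n i.castSucc / uext n j) (θ i)) *
      (∏ i : Fin n, ∏ j ∈ Finset.Ici i,
        qpoch (X PVar.q) (X PVar.t * X (PVar.u i) / v θ j) (θ i) /
          qpoch (X PVar.q) (X (PVar.u i) / v θ j) (θ i)) *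
      ((∏ i : Fin n, ∏ j ∈ Finset.Ioi i, (v θ i - v θ j))⁻¹ *
        Matrix.det (Matrix.of fun i j : Fin n =>
          v θ i ^ (n - 1 - (j : ℕ)) *
            (1 - X PVar.t ^ ((j : ℕ) + 1) *
              ∏ k : Fin (n + 1),
                (uext n k - v θ i) / (X PVar.t * uext n k - v θ i)))) := by
  simp only [prod_Ioi_castSucc, qpoch_ratio_uext_last, ← mul_prod_Ioi_eq_prod_Ici,
    qpoch_ratio_v_self]
  simp only [uext, Fin.snoc_castSucc, pow_succ_mul_prod_snoc_inv (X_ne_zero PVar.t),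
    prod_mul_distrib]
  ring

theorem statement5 (n : ℕ) (hn : 1 ≤ n) (θ : Fin n → ℕ) :
    (∏ k : Fin n,
        X PVar.t ^ θ k *
          (qpoch (X PVar.q) (X PVar.q / X PVar.t) (θ k) / qpoch (X PVar.q) (X PVar.q) (θ k)) *
          (qpoch (X PVar.q) (X PVar.q * X (PVar.u k)) (θ k) /
            qpoch (X PVar.q) (X PVar.q * X PVar.t * X (PVar.u k)) (θ k))) *
      (∏ i : Fin n, ∏ j ∈ Finset.Ioi i,
        (qpoch (X PVar.q) (X PVar.q * X (PVar.u i) / (X PVar.t * X (PVar.u j))) (θ i) /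
            qpoch (X PVar.q) (X PVar.q * X (PVar.u i) / X (PVar.u j)) (θ i)) *
          (qpoch (X PVar.q) (X PVar.t * X (PVar.u i) / v θ j) (θ i) /
            qpoch (X PVar.q) (X (PVar.u i) / v θ j) (θ i))) *
      ((∏ i : Fin n, ∏ j ∈ Finset.Ioi i, (v θ i - v θ j))⁻¹ *
        Matrix.det (Matrix.of fun i j : Fin n =>
          v θ i ^ (n - 1 - (j : ℕ)) *
            (1 - X PVar.t ^ (j : ℕ) * ((1 - X PVar.t * v θ i) / (1 - v θ i)) *
              ∏ k : Fin n,
                (X (PVar.u k) - v θ i) / (X PVar.t * X (PVar.u k) - v θ i)))) =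
    (∏ i : Fin n, ∏ j ∈ Finset.Ioi i.castSucc,
        qpoch (X PVar.q) (X PVar.q * uext n i.castSucc / (X PVar.t * uext n j)) (θ i) /
          qpoch (X PVar.q) (X PVar.q * uext n i.castSucc / uext n j) (θ i)) *
      (∏ i : Fin n, ∏ j ∈ Finset.Ici i,
        qpoch (X PVar.q) (X PVar.t * X (PVar.u i) / v θ j) (θ i) /
          qpoch (X PVar.q) (X (PVar.u i) / v θ j) (θ i)) *
      ((∏ i : Fin n, ∏ j ∈ Finset.Ioi i, (v θ i - v θ j))⁻¹ *
        Matrix.det (Matrix.of fun i j : Fin n =>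
          v θ i ^ (n - 1 - (j : ℕ)) *
            (1 - X PVar.t ^ ((j : ℕ) + 1) *
              ∏ k : Fin (n + 1),
                (uext n k - v θ i) / (X PVar.t * uext n k - v θ i)))) :=
  statement5_general n θ

end Stmt5
end
end
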